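/- For all integers r ≥ 1 and D ≥ 2, the polynomial ∏_{1≤i<j≤D}(x_j−x_i)^r divides \bar F_{r,D}(x_1,…,x_D) in ℚ[x_1,…,x_D], and the polynomial \bar G_{r,D} := (−1)^{(D+1)·r(r−1)/2} · \bar F_{r,D} / ∏_{1≤i<j≤D}(x_j−x_i)^r is a symmetric polynomial of total degree at most r·C(rD−r,2) + D·C(r,2) − r·C(D,2), where C(n,2) = n(n−1)/2. -/

import Mathlib

open Nat Finset

/-- The Vandermonde product `∏_{1 ≤ i < j ≤ D} (x_j − x_i)`. -/
noncomputable def vand (D : ℕ) : MvPolynomial (Fin D) ℚ :=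
  ∏ p ∈ Finset.univ.filter (fun p : Fin D × Fin D => p.1 < p.2),
    (MvPolynomial.X p.2 - MvPolynomial.X p.1)

/-- `F̄_{r,D}(x_1,…,x_D)`: the determinant of the rD×rD matrix whose rows are indexed
(in lexicographic order) by pairs `(i,j)` encoding the row number `k = i·D + j ∈ {0,…,rD−1}`,
and whose columns are indexed by pairs `(m,v)` with `0 ≤ m ≤ r−1`, `1 ≤ v ≤ D` (lex order).
The first r rows (`k < r`, so `k = m'`) have entry 1 if `m = m'` and 0 otherwise; the
remaining rows correspond to `n = k − r + 1 ∈ {1,…,rD−r}` and have entry `B_{n+m}(x_v)/(n+m)`. -/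
noncomputable def Fbar (r D : ℕ) : MvPolynomial (Fin D) ℚ :=
  Matrix.det (Matrix.of fun (p q : Fin r × Fin D) =>
    if (p.1 : ℕ) * D + (p.2 : ℕ) < r then
      (if (q.1 : ℕ) = (p.1 : ℕ) * D + (p.2 : ℕ) then 1 else 0)
    else
      MvPolynomial.C ((((p.1 : ℕ) * D + (p.2 : ℕ) - r + 1 + (q.1 : ℕ) : ℕ) : ℚ))⁻¹ *
        Polynomial.aeval (MvPolynomial.X q.2)
          (Polynomial.bernoulli ((p.1 : ℕ) * D + (p.2 : ℕ) - r + 1 + (q.1 : ℕ))))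

/-- `Δ̄_{r,D}`: the determinant of the analogous rD×rD rational matrix whose first r rows
have entry `(−D)^{m'}` if `m = m'` and 0 otherwise, and whose remaining rows (indexed by
`n = 1,…,rD−r`) have `(n,(m,v))` entry `D^{n+m−1}·B_{n+m}(v/D)/(n+m)`. -/
noncomputable def deltaBar (r D : ℕ) : ℚ :=
  Matrix.det (Matrix.of fun (p q : Fin r × Fin D) =>
    if (p.1 : ℕ) * D + (p.2 : ℕ) < r then
      (if (q.1 : ℕ) = (p.1 : ℕ) * D + (p.2 : ℕ) then (-(D : ℚ)) ^ ((p.1 : ℕ) * D + (p.2 : ℕ)) else 0)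
    else
      (D : ℚ) ^ ((p.1 : ℕ) * D + (p.2 : ℕ) - r + (q.1 : ℕ)) *
        (Polynomial.bernoulli ((p.1 : ℕ) * D + (p.2 : ℕ) - r + 1 + (q.1 : ℕ))).eval
          (((q.2 : ℕ) + 1 : ℚ) / D) /
        (((p.1 : ℕ) * D + (p.2 : ℕ) - r + 1 + (q.1 : ℕ) : ℕ) : ℚ))

/-!
Column `(m, v)` of the matrix defining `Fbar r D` is a fixed vector of polynomials in one variable,
evaluated at `x_v`. Subtracting column `(m, i)` from column `(m, j)` for every `m` does not change
the determinant and makes `r` columns divisible by `x_j - x_i`; these linear forms are pairwise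
non-associated irreducibles in a UFD, so `vand D ^ r` divides `Fbar r D`.

A permutation of the variables permutes the `D` blocks of `r` columns, so it multiplies `Fbar r D`
by `sign ^ r`, exactly as it multiplies `vand D ^ r`: the quotient is symmetric.

An entry in row `n` and column `(m, v)` has degree at most `n + m`, and the `r` constant rows,
given weight `-m'`, only meet the columns with `m = m'`. Hence every term of the Leibniz expansion
has degree at most `∑ n + (D - 1) ∑ m`, and the degree of the quotient is this bound minus
`r * choose D 2`, the degree of `vand D ^ r`.
-/

open MvPolynomial

namespace Matrix

variable {n R : Type*} [Fintype n] [DecidableEq n] [CommRing R]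

theorem pow_card_dvd_det_of_dvd_col_sub {κ : Type*} {d : R} {c c' : κ → n}
    (hc : Function.Injective c) (hcc' : ∀ a b, c a ≠ c' b) (s : Finset κ) (A : Matrix n n R)
    (h : ∀ m ∈ s, ∀ p, d ∣ A p (c m) - A p (c' m)) : d ^ s.card ∣ A.det := by
  classical
  induction s using Finset.induction_on generalizing A with
  | empty => simp
  | @insert a s ha ih =>
    choose w hw using h a (mem_insert_self a s)
    have hdet : A.det = d * (updateCol A (c a) w).det := by
      rw [← det_updateCol_smul, ← det_updateCol_add_smul_self A (hcc' a a) (-1)]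
      congr 2
      ext p
      simp [← hw, sub_eq_add_neg]
    have hw_dvd : d ^ s.card ∣ (updateCol A (c a) w).det := by
      refine ih _ fun m hm p => ?_
      have hma : c m ≠ c a := hc.ne (ne_of_mem_of_not_mem hm ha)
      rw [updateCol_ne hma, updateCol_ne (hcc' a m).symm]
      exact h m (mem_insert_of_mem hm) p
    rw [card_insert_of_notMem ha, _root_.pow_succ', hdet]
    exact mul_dvd_mul_left d hw_dvd

theorem totalDegree_det_le {σ : Type*} (A : Matrix n n (MvPolynomial σ R)) (a b : n → ℤ)
    (h : ∀ i j, A i j ≠ 0 → ((A i j).totalDegree : ℤ) ≤ a i + b j) :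
    A.det.totalDegree ≤ (∑ i, a i + ∑ j, b j).toNat := by
  rw [det_apply]
  refine MvPolynomial.totalDegree_finsetSum_le fun τ _ => ?_
  rw [Units.smul_def]
  refine (totalDegree_smul_le _ _).trans ?_
  by_cases hzero : ∃ j, A (τ j) j = 0
  · obtain ⟨j, hj⟩ := hzero
    rw [prod_eq_zero (f := fun j => A (τ j) j) (mem_univ j) hj, totalDegree_zero]
    exact Nat.zero_le _
  push Not at hzero
  refine (totalDegree_finsetProd _ _).trans ?_
  suffices ((∑ j, (A (τ j) j).totalDegree : ℕ) : ℤ) ≤ ∑ i, a i + ∑ j, b j by omega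
  calc ((∑ j, (A (τ j) j).totalDegree : ℕ) : ℤ)
      ≤ ∑ j, (a (τ j) + b j) := by
        push_cast
        exact sum_le_sum fun j _ => h _ _ (hzero j)
    _ = ∑ i, a i + ∑ j, b j := by rw [sum_add_distrib, Equiv.sum_comp τ a]

end Matrix

namespace MvPolynomial

variable {σ K : Type*} [Field K]

theorem irreducible_X_sub_X {i j : σ} (hij : i ≠ j) :
    Irreducible (X j - X i : MvPolynomial σ K) := by
  classical
  have hne : (X j - X i : MvPolynomial σ K) ≠ 0 :=
    sub_ne_zero.mpr ((X_injective (R := K)).ne hij.symm)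
  refine irreducible_of_totalDegree_eq_one
    (((isHomogeneous_X K j).sub (isHomogeneous_X K i)).totalDegree hne) fun x hx => ?_
  refine isUnit_of_dvd_one ?_
  simpa [coeff_X, Finsupp.single_left_inj, hij] using hx (Finsupp.single j 1)

theorem eq_of_X_sub_X_dvd [LinearOrder σ] {i j k l : σ} (hij : i < j) (hkl : k < l)
    (h : (X j - X i : MvPolynomial σ K) ∣ X l - X k) : (i, j) = (k, l) := by
  classical
  by_contra hne
  obtain ⟨w, hw, hwi, hwj⟩ : ∃ w, (w = k ∨ w = l) ∧ w ≠ i ∧ w ≠ j := by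
    by_cases hk : k = i ∨ k = j
    · refine ⟨l, Or.inr rfl, ?_, ?_⟩ <;> rintro rfl <;> rcases hk with rfl | rfl <;>
        first | exact hne rfl | order
    · push Not at hk
      exact ⟨k, Or.inl rfl, hk⟩
  have hval := map_dvd (eval (Pi.single w (1 : K))) h
  rcases hw with rfl | rfl
  · simp [hwi, hwj, hkl.ne'] at hval
  · simp [hwi, hwj, hkl.ne] at hval

end MvPolynomial

open Matrix

theorem vand_eq_det_vandermonde (D : ℕ) :
    vand D = (vandermonde (X : Fin D → MvPolynomial (Fin D) ℚ)).det := by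
  rw [det_vandermonde, vand, prod_filter, ← univ_product_univ, prod_product]
  refine prod_congr rfl fun i _ => ?_
  rw [← prod_filter]
  congr 1
  ext j
  simp

theorem vand_ne_zero (D : ℕ) : vand D ≠ 0 := by
  rw [vand_eq_det_vandermonde]
  exact det_vandermonde_ne_zero_iff.mpr (X_injective (R := ℚ))

theorem isHomogeneous_vand (D : ℕ) : (vand D).IsHomogeneous (D.choose 2) := by
  have hdeg : ∑ i : Fin D, #(Ioi i) = D.choose 2 := by
    simp only [Fin.card_Ioi]
    rw [Fin.sum_univ_eq_sum_range (fun i => D - 1 - i), sum_range_reflect (fun i => i),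
      sum_range_id, choose_two_right]
  rw [vand_eq_det_vandermonde, det_vandermonde, ← hdeg]
  refine IsHomogeneous.prod _ _ _ fun i _ => ?_
  rw [card_eq_sum_ones]
  exact IsHomogeneous.prod _ _ _ fun j _ => (isHomogeneous_X ℚ j).sub (isHomogeneous_X ℚ i)

theorem rename_vand {D : ℕ} (σ : Equiv.Perm (Fin D)) :
    rename σ (vand D) = (Equiv.Perm.sign σ : ℤ) * vand D := by
  have hperm : (rename σ).mapMatrix (vandermonde (X : Fin D → MvPolynomial (Fin D) ℚ)) =
      (vandermonde X).submatrix σ id := by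
    ext i k
    simp
  rw [vand_eq_det_vandermonde, AlgHom.map_det, hperm, det_permute]

theorem Polynomial.natDegree_bernoulli_le (n : ℕ) : (Polynomial.bernoulli n).natDegree ≤ n :=
  Polynomial.natDegree_le_iff_coeff_eq_zero.mpr fun i hi => by
    rw [Polynomial.coeff_bernoulli, if_neg (by omega)]

theorem MvPolynomial.totalDegree_aeval_X_le {σ R : Type*} [CommSemiring R] [Nontrivial R]
    (v : σ) (f : Polynomial R) :
    (Polynomial.aeval (X v : MvPolynomial σ R) f).totalDegree ≤ f.natDegree := by
  rw [Polynomial.aeval_eq_sum_range]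
  refine totalDegree_finsetSum_le fun i hi => (totalDegree_smul_le _ _).trans ?_
  rw [totalDegree_X_pow]
  exact mem_range_succ_iff.mp hi

noncomputable def FbarEntry (r k m : ℕ) : Polynomial ℚ :=
  if k < r then (if m = k then 1 else 0)
  else Polynomial.C ((k - r + 1 + m : ℕ) : ℚ)⁻¹ * Polynomial.bernoulli (k - r + 1 + m)

noncomputable def FbarMatrix (r D : ℕ) :
    Matrix (Fin r × Fin D) (Fin r × Fin D) (MvPolynomial (Fin D) ℚ) :=
  of fun p q => Polynomial.aeval (X q.2) (FbarEntry r (p.1 * D + p.2) q.1)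

theorem Fbar_eq_det_FbarMatrix (r D : ℕ) : Fbar r D = (FbarMatrix r D).det := by
  unfold Fbar FbarMatrix FbarEntry
  refine congrArg det (Matrix.ext fun p q => ?_)
  simp only [of_apply]
  split_ifs <;> simp

theorem X_sub_X_pow_dvd_Fbar (r : ℕ) {D : ℕ} {i j : Fin D} (hij : i ≠ j) :
    (X j - X i : MvPolynomial (Fin D) ℚ) ^ r ∣ Fbar r D := by
  have hdvd := (FbarMatrix r D).pow_card_dvd_det_of_dvd_col_sub (d := X j - X i)
    (c := fun m => (m, j)) (c' := fun m => (m, i)) (fun _ _ h => congrArg Prod.fst h)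
    (fun _ _ h => hij (congrArg Prod.snd h).symm) univ fun m _ p => by
      simp only [FbarMatrix, of_apply, Polynomial.aeval_def, Polynomial.eval₂_eq_eval_map]
      exact Polynomial.sub_dvd_eval_sub _ _ _
  rwa [Finset.card_univ, Fintype.card_fin, ← Fbar_eq_det_FbarMatrix] at hdvd

theorem vand_pow_dvd_Fbar (r D : ℕ) : vand D ^ r ∣ Fbar r D := by
  rw [vand, ← prod_pow]
  refine prod_dvd_of_isRelPrime (fun p hp q hq hpq => ?_) fun p hp =>
    X_sub_X_pow_dvd_Fbar r (mem_filter.mp hp).2.ne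
  have hplt := (mem_filter.mp hp).2
  have hqlt := (mem_filter.mp hq).2
  refine IsRelPrime.pow ((irreducible_X_sub_X hplt.ne).isRelPrime_iff_not_dvd.mpr fun h => hpq ?_)
  exact eq_of_X_sub_X_dvd hplt hqlt h

theorem rename_Fbar (r : ℕ) {D : ℕ} (σ : Equiv.Perm (Fin D)) :
    rename σ (Fbar r D) =
      ((Equiv.Perm.sign σ : ℤ) : MvPolynomial (Fin D) ℚ) ^ r * Fbar r D := by
  have hperm : (rename σ).mapMatrix (FbarMatrix r D) =
      (FbarMatrix r D).submatrix id (Equiv.prodCongrRight fun _ => σ) := by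
    ext p q
    simp [FbarMatrix, ← Polynomial.aeval_algHom_apply]
  rw [Fbar_eq_det_FbarMatrix, AlgHom.map_det, hperm, det_permute',
    Equiv.Perm.sign_prodCongrRight, prod_const, Finset.card_univ, Fintype.card_fin]
  push_cast
  rfl

theorem Finset.sum_range_intCast_id (n : ℕ) : ∑ i ∈ range n, (i : ℤ) = n.choose 2 := by
  rw [choose_two_right, ← sum_range_id]
  push_cast
  rfl

theorem Fin.sum_prod_eq_sum_range {M : Type*} [AddCommMonoid M] (a b : ℕ) (f : ℕ → M) :
    ∑ p : Fin a × Fin b, f (p.1 * b + p.2) = ∑ k ∈ range (a * b), f k := by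
  rw [← Fin.sum_univ_eq_sum_range, ← finProdFinEquiv.sum_comp]
  congr! 2 with p
  simp [finProdFinEquiv, mul_comm, add_comm]

def FbarRowWeight (r k : ℕ) : ℤ :=
  if k < r then -k else k - r + 1

theorem natDegree_FbarEntry_le {r k m : ℕ} (h : FbarEntry r k m ≠ 0) :
    ((FbarEntry r k m).natDegree : ℤ) ≤ FbarRowWeight r k + m := by
  unfold FbarEntry FbarRowWeight at *
  split_ifs at h ⊢ with hk hm
  · simp [hm]
  · exact absurd rfl h
  · have hdeg := (Polynomial.natDegree_C_mul_le ((k - r + 1 + m : ℕ) : ℚ)⁻¹ _).trans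
      (Polynomial.natDegree_bernoulli_le (k - r + 1 + m))
    omega

theorem sum_range_FbarRowWeight (r N : ℕ) :
    ∑ k ∈ range (r + N), FbarRowWeight r k = (N + 1).choose 2 - r.choose 2 := by
  have hlow : ∀ k ∈ range r, FbarRowWeight r k = -k := fun k hk => if_pos (mem_range.mp hk)
  have hhigh : ∀ t ∈ range N, FbarRowWeight r (r + t) = t + 1 := fun t _ => by
    rw [FbarRowWeight, if_neg (by omega)]
    push_cast
    ring
  have hsucc : ∑ t ∈ range N, ((t : ℤ) + 1) = (N + 1).choose 2 := by
    rw [← sum_range_intCast_id, sum_range_succ']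
    push_cast
    ring
  rw [sum_range_add, sum_congr rfl hlow, sum_congr rfl hhigh, sum_neg_distrib, hsucc,
    sum_range_intCast_id]
  ring

theorem totalDegree_Fbar_le (r : ℕ) {D : ℕ} (hD : 1 ≤ D) :
    (Fbar r D).totalDegree ≤ (r * D - r + 1).choose 2 + (D - 1) * r.choose 2 := by
  obtain ⟨N, hN⟩ : ∃ N, r * D = r + N :=
    ⟨r * D - r, (Nat.add_sub_cancel' (Nat.le_mul_of_pos_right r hD)).symm⟩
  have hrow : ∑ p : Fin r × Fin D, FbarRowWeight r (p.1 * D + p.2) =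
      (N + 1).choose 2 - r.choose 2 := by
    rw [Fin.sum_prod_eq_sum_range (f := FbarRowWeight r), hN, sum_range_FbarRowWeight]
  have hcol : ∑ q : Fin r × Fin D, ((q.1 : ℕ) : ℤ) = D * r.choose 2 := by
    rw [Fintype.sum_prod_type, Fin.sum_univ_eq_sum_range (fun m => ∑ _v : Fin D, (m : ℤ)),
      sum_comm]
    simp [sum_range_intCast_id]
  rw [Fbar_eq_det_FbarMatrix]
  refine ((FbarMatrix r D).totalDegree_det_le (fun p => FbarRowWeight r (p.1 * D + p.2))
    (fun q => ((q.1 : ℕ) : ℤ)) fun p q h => ?_).trans (le_of_eq ?_)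
  · have hne : FbarEntry r (p.1 * D + p.2) q.1 ≠ 0 := fun h0 => h (by simp [FbarMatrix, h0])
    exact (Nat.cast_le.mpr (totalDegree_aeval_X_le _ _)).trans (natDegree_FbarEntry_le hne)
  · obtain ⟨D, rfl⟩ := Nat.exists_eq_add_of_le' hD
    rw [hrow, hcol, show r * (D + 1) - r = N by omega]
    simp only [add_tsub_cancel_right]
    rw [← Int.toNat_natCast ((N + 1).choose 2 + D * r.choose 2)]
    congr 1
    push_cast
    ring

theorem isSymmetric_of_Fbar_eq_vand_pow_mul {r D : ℕ} {G : MvPolynomial (Fin D) ℚ}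
    (hG : Fbar r D = vand D ^ r * G) : G.IsSymmetric := by
  intro σ
  have hsign : ((Equiv.Perm.sign σ : ℤ) : MvPolynomial (Fin D) ℚ) ^ r * vand D ^ r ≠ 0 :=
    mul_ne_zero (pow_ne_zero _ (Int.cast_ne_zero.mpr (Units.ne_zero _)))
      (pow_ne_zero _ (vand_ne_zero D))
  have h := congrArg (rename σ) hG
  rw [rename_Fbar, map_mul, map_pow, rename_vand, mul_pow, hG, ← mul_assoc] at h
  exact (mul_left_cancel₀ hsign h).symm

theorem totalDegree_vand_pow_mul {r D : ℕ} {G : MvPolynomial (Fin D) ℚ} (hG : G ≠ 0) :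
    (vand D ^ r * G).totalDegree = r * D.choose 2 + G.totalDegree := by
  rw [totalDegree_mul_of_isDomain (pow_ne_zero _ (vand_ne_zero D)) hG,
    ((isHomogeneous_vand D).pow r).totalDegree (pow_ne_zero _ (vand_ne_zero D)), mul_comm]

/-- For `r = 1` the hypothesis forces `t = 0`, while the truncated subtraction on the right
is `0` as well. -/
theorem le_degree_bound_of_add_le {r D t : ℕ}
    (h : t + r * D.choose 2 ≤ (r * D - r + 1).choose 2 + (D - 1) * r.choose 2) :
    t ≤ r * (r * D - r).choose 2 + D * r.choose 2 - r * D.choose 2 := by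
  rcases Nat.lt_or_ge r 2 with hr | hr
  · suffices t = 0 by omega
    interval_cases r
    · simpa using h
    · rcases D with _ | D
      · simpa using h
      · simpa using h
  rcases D with _ | D
  · simpa using h
  set N := r * (D + 1) - r
  have hsucc : (N + 1).choose 2 = N.choose 2 + N := by
    rw [choose_succ_succ', choose_one_right, add_comm]
  have hN : N ≤ N.choose 2 + 1 := by
    rcases N with _ | N
    · simp
    · rw [choose_succ_succ', choose_one_right]
      omega
  have hr2 : 2 * N.choose 2 ≤ r * N.choose 2 := Nat.mul_le_mul_right _ hr
  have hcr : 1 ≤ r.choose 2 := choose_pos hr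
  rw [add_tsub_cancel_right] at h
  have hD : (D + 1) * r.choose 2 = D * r.choose 2 + r.choose 2 := Nat.add_one_mul _ _
  omega

theorem vandermonde_pow_dvd_Fbar_general (r D : ℕ) (hD : 2 ≤ D) :
    ∃ G : MvPolynomial (Fin D) ℚ,
      MvPolynomial.C ((-1 : ℚ) ^ ((D + 1) * (r * (r - 1) / 2))) * Fbar r D = vand D ^ r * G ∧
        G.IsSymmetric ∧
        G.totalDegree ≤
          r * Nat.choose (r * D - r) 2 + D * Nat.choose r 2 - r * Nat.choose D 2 := by
  obtain ⟨G, hG⟩ := vand_pow_dvd_Fbar r D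
  refine ⟨C ((-1 : ℚ) ^ ((D + 1) * (r * (r - 1) / 2))) * G, by rw [hG]; ring,
    (IsSymmetric.C _).mul (isSymmetric_of_Fbar_eq_vand_pow_mul hG), ?_⟩
  refine (totalDegree_mul _ _).trans ?_
  rw [totalDegree_C, zero_add]
  rcases eq_or_ne G 0 with rfl | hG0
  · simp
  have hdeg := totalDegree_Fbar_le r (D := D) (by omega)
  rw [hG, totalDegree_vand_pow_mul hG0, add_comm] at hdeg
  exact le_degree_bound_of_add_le hdeg

/-- For all r ≥ 1 and D ≥ 2, `∏_{i<j}(x_j−x_i)^r` divides `F̄_{r,D}`, and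
`Ḡ_{r,D} := (−1)^{(D+1)·r(r−1)/2}·F̄_{r,D}/∏_{i<j}(x_j−x_i)^r` is a symmetric polynomial of
total degree at most `r·C(rD−r,2) + D·C(r,2) − r·C(D,2)`. -/
theorem vandermonde_pow_dvd_Fbar (r D : ℕ) (hr : 1 ≤ r) (hD : 2 ≤ D) :
    ∃ G : MvPolynomial (Fin D) ℚ,
      MvPolynomial.C ((-1 : ℚ) ^ ((D + 1) * (r * (r - 1) / 2))) * Fbar r D = vand D ^ r * G ∧
        G.IsSymmetric ∧
        G.totalDegree ≤
          r * Nat.choose (r * D - r) 2 + D * Nat.choose r 2 - r * Nat.choose D 2 :=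
  vandermonde_pow_dvd_Fbar_general r D hD
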